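/- arXiv:2404.13540 — 4 statements merged into one kernel-verified Lean document; each statement's English description precedes it below -/
import Mathlib

section
/- Let a_1,...,a_k ∈ S^{n-1} span a (k-1)-dimensional affine plane, P the parallel linear (k-1)-subspace, and c = inf{f(w) : w ∈ P, 1/2 ≤ ‖w‖ ≤ 1} > 0 where f(w) = sup_i ⟨w, π_P(a_i)⟩ − inf_i ⟨w, π_P(a_i)⟩. Then for every 0 < r < 1/2 and every nonzero v in the cone P_r = {v : dist(v, P) < r‖v‖}, one has sup_{1≤i≤k} cos∠(v, 0, a_i) − inf_{1≤i≤k} cos∠(v, 0, a_i) > c, where cos∠(v,0,a_i) = ⟨v, a_i⟩/‖v‖. -/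
/-!
Write `p` for the projection of `v` onto `P`. Since all `aᵢ - aⱼ` lie in `P`, the component `v - p`
pairs with every `aᵢ` to the same number, so the spread of `⟪v, aᵢ⟫` equals that of `⟪p, aᵢ⟫`, which
is also `f p`. The cone condition gives `‖p‖ > ‖v‖ / 2`. The spread is positively homogeneous and,
on nonzero vectors of `P`, positive (such a vector cannot be orthogonal to all `aᵢ - aⱼ`). With
`w = p / ‖v‖` and `u = w / (2‖w‖)`, a point of the annulus, the spread of `⟪v, aᵢ⟫ / ‖v‖` is
therefore `2‖w‖ f u > f u ≥ c`.
-/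

open RealInnerProductSpace

section Spread

variable {ι : Type*}

noncomputable def spread (g : ι → ℝ) : ℝ := (⨆ i, g i) - ⨅ i, g i

lemma spread_nonneg [Finite ι] [Nonempty ι] (g : ι → ℝ) : 0 ≤ spread g := by
  obtain ⟨i⟩ := ‹Nonempty ι›
  have hinf := ciInf_le (Finite.bddBelow_range g) i
  have hsup := le_ciSup (Finite.bddAbove_range g) i
  unfold spread
  linarith

lemma spread_pos_of_ne [Finite ι] {g : ι → ℝ} {i j : ι} (h : g i ≠ g j) : 0 < spread g := by
  have := ciInf_le (Finite.bddBelow_range g) i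
  have := ciInf_le (Finite.bddBelow_range g) j
  have := le_ciSup (Finite.bddAbove_range g) i
  have := le_ciSup (Finite.bddAbove_range g) j
  unfold spread
  rcases h.lt_or_gt with h | h <;> linarith

lemma spread_add_const [Finite ι] [Nonempty ι] (g : ι → ℝ) (C : ℝ) :
    spread (fun i => g i + C) = spread g := by
  unfold spread
  rw [← ciSup_add (Finite.bddAbove_range g), ← ciInf_add (Finite.bddBelow_range g)]
  ring

lemma spread_const_mul (g : ι → ℝ) {t : ℝ} (ht : 0 ≤ t) :
    spread (fun i => t * g i) = t * spread g := by
  unfold spread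
  simp only [← smul_eq_mul, ← Real.smul_iSup_of_nonneg ht, ← Real.smul_iInf_of_nonneg ht]
  ring

lemma spread_div_const (g : ι → ℝ) {t : ℝ} (ht : 0 ≤ t) :
    spread (fun i => g i / t) = t⁻¹ * spread g := by
  simp_rw [div_eq_inv_mul]
  exact spread_const_mul g (inv_nonneg.mpr ht)

end Spread

section Projection

variable {E : Type*} [NormedAddCommGroup E] [InnerProductSpace ℝ E]
  (K : Submodule ℝ E) [K.HasOrthogonalProjection]

lemma Submodule.infDist_eq_norm_sub_starProjection (v : E) :
    Metric.infDist v (K : Set E) = ‖v - K.starProjection v‖ := by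
  rw [Metric.infDist_eq_iInf, K.starProjection_minimal v]
  simp_rw [dist_eq_norm]
  rfl

lemma Submodule.half_norm_lt_norm_starProjection {v : E} {r : ℝ} (hr : r < 1 / 2)
    (hv : ‖v - K.starProjection v‖ < r * ‖v‖) : ‖v‖ / 2 < ‖K.starProjection v‖ := by
  have := norm_le_norm_add_norm_sub' v (K.starProjection v)
  nlinarith [norm_nonneg v]

lemma Submodule.inner_starProjection_right_of_mem {w : E} (hw : w ∈ K) (x : E) :
    ⟪w, K.starProjection x⟫ = ⟪w, x⟫ := by
  rw [← K.inner_starProjection_left_eq_right, K.starProjection_eq_self_iff.mpr hw]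

end Projection

section InnerSpread

variable {ι E : Type*} [NormedAddCommGroup E] [InnerProductSpace ℝ E] (a : ι → E)

lemma sub_mem_vectorSpan_range (i j : ι) : a i - a j ∈ vectorSpan ℝ (Set.range a) :=
  vsub_mem_vectorSpan ℝ (Set.mem_range_self i) (Set.mem_range_self j)

lemma spread_inner_smul {t : ℝ} (ht : 0 ≤ t) (w : E) :
    spread (fun i => ⟪t • w, a i⟫) = t * spread (fun i => ⟪w, a i⟫) := by
  simp_rw [real_inner_smul_left]
  exact spread_const_mul _ ht

lemma spread_inner_starProjection [Finite ι] [Nonempty ι] {K : Submodule ℝ E}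
    [K.HasOrthogonalProjection] (hK : ∀ i j, a i - a j ∈ K) (v : E) :
    spread (fun i => ⟪K.starProjection v, a i⟫) = spread (fun i => ⟪v, a i⟫) := by
  obtain ⟨i₀⟩ := ‹Nonempty ι›
  have hconst : ∀ i, ⟪v, a i⟫ = ⟪K.starProjection v, a i⟫ + ⟪v - K.starProjection v, a i₀⟫ := by
    intro i
    have horth : ⟪v - K.starProjection v, a i - a i₀⟫ = 0 :=
      Submodule.inner_left_of_mem_orthogonal (hK i i₀) (K.sub_starProjection_mem_orthogonal v)
    rw [inner_sub_right, inner_sub_left (x := v)] at horth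
    linarith
  simp_rw [hconst]
  exact (spread_add_const _ _).symm

lemma spread_inner_pos [Finite ι] {u : E} (hu : u ∈ vectorSpan ℝ (Set.range a)) (hu0 : u ≠ 0) :
    0 < spread (fun i => ⟪u, a i⟫) := by
  by_contra hzero
  have hall : ∀ i j, ⟪u, a i⟫ = ⟪u, a j⟫ := fun i j => by
    by_contra h
    exact hzero (spread_pos_of_ne h)
  have hspan : vectorSpan ℝ (Set.range a) ≤ (ℝ ∙ u)ᗮ := by
    rw [vectorSpan_def, Submodule.span_le]
    rintro _ ⟨_, ⟨i, rfl⟩, _, ⟨j, rfl⟩, rfl⟩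
    simp [Submodule.mem_orthogonal_singleton_iff_inner_right, inner_sub_right, hall i j]
  exact hu0 (inner_self_eq_zero.mp (Submodule.mem_orthogonal_singleton_iff_inner_right.mp (hspan hu)))

lemma spread_inner_lt_of_half_lt_norm [Finite ι] {w : E} (hw : w ∈ vectorSpan ℝ (Set.range a))
    (hw2 : 1 / 2 < ‖w‖) :
    spread (fun i => ⟪(2 * ‖w‖)⁻¹ • w, a i⟫) < spread (fun i => ⟪w, a i⟫) := by
  have hpos : 0 < spread (fun i => ⟪(2 * ‖w‖)⁻¹ • w, a i⟫) :=
    spread_inner_pos a (Submodule.smul_mem _ _ hw) (smul_ne_zero (by positivity) (by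
      rintro rfl; norm_num at hw2))
  have hscale : w = (2 * ‖w‖) • (2 * ‖w‖)⁻¹ • w := by
    rw [smul_smul, mul_inv_cancel₀ (by positivity), one_smul]
  conv_rhs => rw [hscale, spread_inner_smul a (by positivity)]
  nlinarith

end InnerSpread

theorem stmt2_general (n k : ℕ) (hk2 : 2 ≤ k)
    (a : Fin k → EuclideanSpace ℝ (Fin n))
    (P : Submodule ℝ (EuclideanSpace ℝ (Fin n)))
    (hP : P = vectorSpan ℝ (Set.range a))
    (f : EuclideanSpace ℝ (Fin n) → ℝ)
    (hf : ∀ w, f w = (⨆ i, ⟪w, (Submodule.orthogonalProjectionOnto P (a i) : EuclideanSpace ℝ (Fin n))⟫)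
        - (⨅ i, ⟪w, (Submodule.orthogonalProjectionOnto P (a i) : EuclideanSpace ℝ (Fin n))⟫))
    (c : ℝ)
    (hc : c = sInf (f '' {w : EuclideanSpace ℝ (Fin n) | w ∈ P ∧ 1 / 2 ≤ ‖w‖ ∧ ‖w‖ ≤ 1})) :
    ∀ r : ℝ, 0 < r → r < 1 / 2 →
      ∀ v : EuclideanSpace ℝ (Fin n), v ≠ 0 →
        Metric.infDist v (P : Set (EuclideanSpace ℝ (Fin n))) < r * ‖v‖ →
        (⨆ i, ⟪v, a i⟫ / ‖v‖) - (⨅ i, ⟪v, a i⟫ / ‖v‖) > c := by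
  intro r _ hr v hv hdist
  subst hP
  have : Nonempty (Fin k) := ⟨⟨0, by omega⟩⟩
  set P := vectorSpan ℝ (Set.range a)
  have hf' : ∀ w, f w = spread (fun i => ⟪w, P.starProjection (a i)⟫) := hf
  set w := ‖v‖⁻¹ • P.starProjection v
  have hwP : w ∈ P := P.smul_mem _ (P.starProjection_apply_mem v)
  have hw : 1 / 2 < ‖w‖ := by
    have hvpos : 0 < ‖v‖ := norm_pos_iff.mpr hv
    have := P.half_norm_lt_norm_starProjection hr (P.infDist_eq_norm_sub_starProjection v ▸ hdist)
    rw [norm_smul, norm_inv, norm_norm, inv_mul_eq_div, lt_div_iff₀ hvpos]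
    linarith
  have hgoal : spread (fun i => ⟪v, a i⟫ / ‖v‖) = spread (fun i => ⟪w, a i⟫) := by
    rw [spread_div_const _ (norm_nonneg v), spread_inner_smul a (by positivity),
      spread_inner_starProjection a (sub_mem_vectorSpan_range a)]
  set u := (2 * ‖w‖)⁻¹ • w
  have huP : u ∈ P := P.smul_mem _ hwP
  have hu : ‖u‖ = 1 / 2 := by
    rw [norm_smul, norm_inv, norm_mul, norm_norm, Real.norm_two, mul_inv, mul_assoc,
      inv_mul_cancel₀ (by linarith), mul_one, one_div]
  have hfu : f u = spread (fun i => ⟪u, a i⟫) := by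
    simp only [hf', P.inner_starProjection_right_of_mem huP]
  have hcu : c ≤ f u := by
    rw [hc]
    refine csInf_le ⟨0, ?_⟩ ⟨u, ⟨huP, hu.ge, by rw [hu]; norm_num⟩, rfl⟩
    rintro _ ⟨x, -, rfl⟩
    exact hf' x ▸ spread_nonneg _
  change c < spread (fun i => ⟪v, a i⟫ / ‖v‖)
  rw [hgoal]
  exact hcu.trans_lt (hfu ▸ spread_inner_lt_of_half_lt_norm a hwP hw)

theorem stmt2 (n k : ℕ) (hn : 1 ≤ n) (hk2 : 2 ≤ k) (hkn : k ≤ n + 1)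
    (a : Fin k → EuclideanSpace ℝ (Fin n))
    (ha : ∀ i, ‖a i‖ = 1)
    (hgeneric : AffineIndependent ℝ a)
    (P : Submodule ℝ (EuclideanSpace ℝ (Fin n)))
    (hP : P = vectorSpan ℝ (Set.range a))
    (f : EuclideanSpace ℝ (Fin n) → ℝ)
    (hf : ∀ w, f w = (⨆ i, ⟪w, (Submodule.orthogonalProjectionOnto P (a i) : EuclideanSpace ℝ (Fin n))⟫)
        - (⨅ i, ⟪w, (Submodule.orthogonalProjectionOnto P (a i) : EuclideanSpace ℝ (Fin n))⟫))
    (c : ℝ)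
    (hc : c = sInf (f '' {w : EuclideanSpace ℝ (Fin n) | w ∈ P ∧ 1 / 2 ≤ ‖w‖ ∧ ‖w‖ ≤ 1})) :
    ∀ r : ℝ, 0 < r → r < 1 / 2 →
      ∀ v : EuclideanSpace ℝ (Fin n), v ≠ 0 →
        Metric.infDist v (P : Set (EuclideanSpace ℝ (Fin n))) < r * ‖v‖ →
        (⨆ i, ⟪v, a i⟫ / ‖v‖) - (⨅ i, ⟪v, a i⟫ / ‖v‖) > c :=
  stmt2_general n k hk2 a P hP f hf c hc
end

section
/- Let E ⊂ ℝ^n be a nonempty closed set, d(x) = dist(x,E), and suppose x ∈ ℝ^n, v ∈ ℝ^n, y_1 is a unit vector with x + d(x)·y_1 ∈ E, and z is a unit vector. Set q = x + v + d(x+v)·z. Then ‖q − x‖² ≤ d(x)² + 2‖v‖ d(x) [⟨v/‖v‖, z⟩ − ⟨v/‖v‖, y_1⟩] + 4‖v‖² whenever v ≠ 0. -/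
/-!
Let `d = dist(·, E)`, `d' = d(x + v)`. Since `p = x + d(x) y₁ ∈ E`, we get
`d'² ≤ ‖v - d(x) y₁‖² = ‖v‖² - 2 d(x) ⟪v, y₁⟫ + d(x)²`, while `q - x = v + d' z` gives
`‖q - x‖² = ‖v‖² + 2 d' ⟪v, z⟫ + d'²`. Adding these, it remains to trade `d'` for `d(x)` in the
cross term, and `(d' - d(x)) ⟪v, z⟫ ≤ ‖v‖²` because `d` is `1`-Lipschitz and `z` is a unit vector.
-/

open RealInnerProductSpace Metric

theorem abs_infDist_add_sub_infDist_le {F : Type*} [SeminormedAddCommGroup F]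
    (E : Set F) (x v : F) :
    |infDist (x + v) E - infDist x E| ≤ ‖v‖ := by
  have h := (lipschitz_infDist_pt (s := E)).dist_le_mul (x + v) x
  rwa [Real.dist_eq, NNReal.coe_one, one_mul, dist_eq_norm, add_sub_cancel_left] at h

section

variable {F : Type*} [NormedAddCommGroup F] [InnerProductSpace ℝ F]

theorem norm_add_smul_sq_of_norm_eq_one (v : F) {y : F} (hy : ‖y‖ = 1) (t : ℝ) :
    ‖v + t • y‖ ^ 2 = ‖v‖ ^ 2 + 2 * t * ⟪v, y⟫ + t ^ 2 := by
  rw [norm_add_sq_real, real_inner_smul_right, norm_smul, mul_pow, Real.norm_eq_abs, sq_abs, hy]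
  ring

theorem infDist_add_sq_le_of_add_smul_mem {E : Set F} {x y : F} (v : F) (hy : ‖y‖ = 1)
    (hmem : x + infDist x E • y ∈ E) :
    infDist (x + v) E ^ 2 ≤ ‖v‖ ^ 2 - 2 * infDist x E * ⟪v, y⟫ + infDist x E ^ 2 := by
  have hle : infDist (x + v) E ≤ ‖v + (-infDist x E) • y‖ := by
    convert infDist_le_dist_of_mem hmem using 1
    rw [dist_eq_norm, neg_smul, ← sub_eq_add_neg, add_sub_add_left_eq_sub]
  calc infDist (x + v) E ^ 2 ≤ ‖v + (-infDist x E) • y‖ ^ 2 := by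
        gcongr
        exact infDist_nonneg
    _ = _ := by rw [norm_add_smul_sq_of_norm_eq_one v hy]; ring

theorem norm_mul_inner_inv_norm_smul (v z : F) : ‖v‖ * ⟪‖v‖⁻¹ • v, z⟫ = ⟪v, z⟫ := by
  rcases eq_or_ne v 0 with rfl | hv
  · simp
  · rw [real_inner_smul_left, mul_inv_cancel_left₀ (norm_ne_zero_iff.mpr hv)]

end

theorem stmt6_general (n : ℕ) (E : Set (EuclideanSpace ℝ (Fin n)))
    (x v y₁ z : EuclideanSpace ℝ (Fin n))
    (hy₁ : ‖y₁‖ = 1) (hz : ‖z‖ = 1)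
    (hnear : x + (Metric.infDist x E) • y₁ ∈ E)
    (q : EuclideanSpace ℝ (Fin n))
    (hq : q = x + v + (Metric.infDist (x + v) E) • z) :
    ‖q - x‖ ^ 2 ≤ (Metric.infDist x E) ^ 2
      + 2 * ‖v‖ * Metric.infDist x E * (⟪‖v‖⁻¹ • v, z⟫ - ⟪‖v‖⁻¹ • v, y₁⟫)
      + 4 * ‖v‖ ^ 2 := by
  have hqx : ‖q - x‖ ^ 2 = ‖v‖ ^ 2 + 2 * infDist (x + v) E * ⟪v, z⟫ + infDist (x + v) E ^ 2 := by
    rw [hq, show x + v + infDist (x + v) E • z - x = v + infDist (x + v) E • z by abel]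
    exact norm_add_smul_sq_of_norm_eq_one v hz _
  have hcross : (infDist (x + v) E - infDist x E) * ⟪v, z⟫ ≤ ‖v‖ ^ 2 := by
    have hvz : |⟪v, z⟫| ≤ ‖v‖ := by simpa [hz] using abs_real_inner_le_norm v z
    calc _ ≤ |infDist (x + v) E - infDist x E| * |⟪v, z⟫| := by rw [← abs_mul]; exact le_abs_self _
      _ ≤ ‖v‖ * ‖v‖ := by
        gcongr
        exact abs_infDist_add_sub_infDist_le E x v
      _ = ‖v‖ ^ 2 := (sq _).symm
  have hnormalize : 2 * ‖v‖ * infDist x E * (⟪‖v‖⁻¹ • v, z⟫ - ⟪‖v‖⁻¹ • v, y₁⟫)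
      = 2 * infDist x E * (⟪v, z⟫ - ⟪v, y₁⟫) := by
    rw [← norm_mul_inner_inv_norm_smul v z, ← norm_mul_inner_inv_norm_smul v y₁]
    ring
  rw [hqx, hnormalize]
  linarith [infDist_add_sq_le_of_add_smul_mem v hy₁ hnear]

theorem stmt6 (n : ℕ) (E : Set (EuclideanSpace ℝ (Fin n)))
    (hEne : E.Nonempty) (hEcl : IsClosed E)
    (x v y₁ z : EuclideanSpace ℝ (Fin n))
    (hv : v ≠ 0) (hy₁ : ‖y₁‖ = 1) (hz : ‖z‖ = 1)
    (hnear : x + (Metric.infDist x E) • y₁ ∈ E)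
    (q : EuclideanSpace ℝ (Fin n))
    (hq : q = x + v + (Metric.infDist (x + v) E) • z) :
    ‖q - x‖ ^ 2 ≤ (Metric.infDist x E) ^ 2
      + 2 * ‖v‖ * Metric.infDist x E * (⟪‖v‖⁻¹ • v, z⟫ - ⟪‖v‖⁻¹ • v, y₁⟫)
      + 4 * ‖v‖ ^ 2 :=
  stmt6_general n E x v y₁ z hy₁ hz hnear q hq
end

section
/- Let E ⊂ ℝ^n be a nonempty closed set. Then the (n+1)-medial axis M_{n+1}(E)—the set of points x whose nearest-point set φ(x) contains n+1 affinely independent points—is countable. -/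
/-- The set of nearest points of `x` in `E`. -/
def nearestPts {n : ℕ} (E : Set (EuclideanSpace ℝ (Fin n))) (x : EuclideanSpace ℝ (Fin n)) :
    Set (EuclideanSpace ℝ (Fin n)) :=
  {y ∈ E | dist x y = Metric.infDist x E}

/-- The `k`-medial axis of `E`: points at positive distance from `E` whose nearest-point set
contains `k` points not all in a `(k-2)`-dimensional affine subspace, i.e. `k` affinely
independent nearest points. -/
def medialAxis (n k : ℕ) (E : Set (EuclideanSpace ℝ (Fin n))) :
    Set (EuclideanSpace ℝ (Fin n)) :=
  {x | 0 < Metric.infDist x E ∧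
    ∃ y : Fin k → EuclideanSpace ℝ (Fin n),
      (∀ i, y i ∈ nearestPts E x) ∧ AffineIndependent ℝ y}

/-! Every nearest point `y` of `x` satisfies `dist x' E ≤ ‖x' - y‖`; expanding the square puts
`y`, hence all of `conv φ(x)`, in a half-space. Adding the half-space inequalities for `x` and
`x'` shows that the nearest-point map is monotone: `⟪x - x', p - p'⟫ ≥ 0` whenever
`p ∈ conv φ(x)` and `p' ∈ conv φ(x')`. Testing this with `p` slightly off a common point in the
direction `x' - x` shows that the interiors of the hulls `conv φ(x)` are pairwise disjoint. For
`x` in the `(n+1)`-medial axis, `φ(x)` contains the vertices of an `n`-simplex, so that interior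
is nonempty, and a separable space has only countably many disjoint nonempty open sets. -/

open Function Metric Filter Topology

theorem two_inner_le_of_dist_eq_infDist {F : Type*} [NormedAddCommGroup F]
    [InnerProductSpace ℝ F] {E : Set F} {x y : F} (hyE : y ∈ E) (hxy : dist x y = infDist x E)
    (x' : F) :
    2 * inner ℝ (x' - x) (y - x) ≤ ‖x' - x‖ ^ 2 + infDist x E ^ 2 - infDist x' E ^ 2 := by
  have hx'y : infDist x' E ^ 2 ≤ ‖x' - y‖ ^ 2 := by
    rw [← dist_eq_norm]
    exact pow_le_pow_left₀ infDist_nonneg (infDist_le_dist_of_mem hyE) 2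
  have hexpand : ‖x' - y‖ ^ 2 = ‖x' - x‖ ^ 2 - 2 * inner ℝ (x' - x) (y - x) + ‖y - x‖ ^ 2 := by
    rw [← norm_sub_sq_real, sub_sub_sub_cancel_right]
  rw [← dist_eq_norm y x, dist_comm, hxy] at hexpand
  linarith

theorem AffineIndependent.interior_convexHull_nonempty {V ι : Type*} [NormedAddCommGroup V]
    [NormedSpace ℝ V] [FiniteDimensional ℝ V] [Fintype ι] {y : ι → V}
    (hy : AffineIndependent ℝ y) (hcard : Fintype.card ι = Module.finrank ℝ V + 1) :
    (interior (convexHull ℝ (Set.range y))).Nonempty :=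
  interior_convexHull_nonempty_iff_affineSpan_eq_top.mpr
    (hy.affineSpan_eq_top_iff_card_eq_finrank_add_one.mpr hcard)

section NearestPoints

variable {n : ℕ} {E : Set (EuclideanSpace ℝ (Fin n))}

theorem two_inner_le_of_mem_convexHull_nearestPts {x p : EuclideanSpace ℝ (Fin n)}
    (hp : p ∈ convexHull ℝ (nearestPts E x)) (x' : EuclideanSpace ℝ (Fin n)) :
    2 * inner ℝ (x' - x) (p - x) ≤ ‖x' - x‖ ^ 2 + infDist x E ^ 2 - infDist x' E ^ 2 := by
  set C := ‖x' - x‖ ^ 2 + infDist x E ^ 2 - infDist x' E ^ 2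
  have hset : {q | 2 * inner ℝ (x' - x) (q - x) ≤ C} =
      {q | innerₛₗ ℝ (x' - x) q ≤ C / 2 + inner ℝ (x' - x) x} := by
    ext q
    simp only [Set.mem_ofPred_eq, innerₛₗ_apply_apply, inner_sub_right]
    constructor <;> intro h <;> linarith
  have hconv : Convex ℝ {q | 2 * inner ℝ (x' - x) (q - x) ≤ C} := by
    rw [hset]
    exact convex_halfSpace_le (innerₛₗ ℝ (x' - x)).isLinear _
  exact convexHull_min (fun y hy => two_inner_le_of_dist_eq_infDist hy.1 hy.2 x') hconv hp

theorem inner_sub_nonneg_of_mem_convexHull_nearestPts {x x' p p' : EuclideanSpace ℝ (Fin n)}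
    (hp : p ∈ convexHull ℝ (nearestPts E x)) (hp' : p' ∈ convexHull ℝ (nearestPts E x')) :
    0 ≤ inner ℝ (x - x') (p - p') := by
  have h := two_inner_le_of_mem_convexHull_nearestPts hp x'
  have h' := two_inner_le_of_mem_convexHull_nearestPts hp' x
  have hsum : inner ℝ (x' - x) (p - x) + inner ℝ (x - x') (p' - x') =
      ‖x - x'‖ ^ 2 - inner ℝ (x - x') (p - p') := by
    rw [← neg_sub x x', inner_neg_left, ← real_inner_self_eq_norm_sq, ← inner_sub_right,
      neg_add_eq_sub, ← inner_sub_right]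
    congr 1
    abel
  rw [norm_sub_rev x' x] at h
  linarith

theorem eq_of_mem_interior_convexHull_nearestPts {x x' z : EuclideanSpace ℝ (Fin n)}
    (hz : z ∈ interior (convexHull ℝ (nearestPts E x)))
    (hz' : z ∈ convexHull ℝ (nearestPts E x')) : x = x' := by
  have hpath : Tendsto (fun t : ℝ => z - t • (x - x')) (𝓝 0) (𝓝 z) :=
    (by fun_prop : Continuous fun t : ℝ => z - t • (x - x')).tendsto' 0 z (by simp)
  have hnear : ∀ᶠ t in 𝓝[>] (0 : ℝ), z - t • (x - x') ∈ convexHull ℝ (nearestPts E x) :=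
    nhdsWithin_le_nhds (hpath (mem_interior_iff_mem_nhds.mp hz))
  obtain ⟨t, ht, htpos⟩ := (hnear.and self_mem_nhdsWithin).exists
  have hmono := inner_sub_nonneg_of_mem_convexHull_nearestPts ht hz'
  rw [sub_sub_cancel_left, inner_neg_right, real_inner_smul_right,
    real_inner_self_eq_norm_sq, neg_nonneg] at hmono
  have hsq : ‖x - x'‖ ^ 2 = 0 :=
    le_antisymm (nonpos_of_mul_nonpos_right hmono htpos) (sq_nonneg _)
  rwa [sq_eq_zero_iff, norm_eq_zero, sub_eq_zero] at hsq

variable (E) in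
theorem pairwise_disjoint_interior_convexHull_nearestPts :
    Pairwise (Disjoint on fun x => interior (convexHull ℝ (nearestPts E x))) :=
  fun _ _ hne => Set.disjoint_left.mpr fun _ hz hz' =>
    hne (eq_of_mem_interior_convexHull_nearestPts hz (interior_subset hz'))

end NearestPoints

theorem stmt10_general (n : ℕ) (E : Set (EuclideanSpace ℝ (Fin n))) :
    (medialAxis n (n + 1) E).Countable := by
  refine Set.PairwiseDisjoint.countable_of_isOpen
    (fun x _ x' _ hne => pairwise_disjoint_interior_convexHull_nearestPts E hne)
    (fun _ _ => isOpen_interior) ?_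
  rintro x ⟨-, y, hy, hind⟩
  have hsimplex := hind.interior_convexHull_nonempty (by simp)
  exact hsimplex.mono (interior_mono (convexHull_mono (Set.range_subset_iff.mpr hy)))

theorem stmt10 (n : ℕ) (E : Set (EuclideanSpace ℝ (Fin n)))
    (hEne : E.Nonempty) (hEcl : IsClosed E) :
    (medialAxis n (n + 1) E).Countable :=
  stmt10_general n E
end

section
/- Let E ⊂ ℝ^n be a nonempty closed set and 2 ≤ k ≤ n+1. Then the k-medial axis M_k(E) is countably (n−k+1)-rectifiable; in particular its Hausdorff dimension is at most n−k+1. -/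
open MeasureTheory

/-- A set `S ⊆ ℝⁿ` is countably `m`-rectifiable if, up to an `H^m`-null set, it is covered by
countably many Lipschitz images of `ℝᵐ`. -/
def CountablyRectifiable (m : ℕ) {n : ℕ} (S : Set (EuclideanSpace ℝ (Fin n))) : Prop :=
  ∃ (f : ℕ → EuclideanSpace ℝ (Fin m) → EuclideanSpace ℝ (Fin n)) (K : ℕ → NNReal),
    (∀ i, LipschitzWith (K i) (f i)) ∧
    μH[m] (S \ ⋃ i, Set.range (f i)) = 0

/-!
The nearest-point map is monotone: if `y` is nearest to `x` and `y'` to `x'` in `E`, then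
`⟪x' - x, y' - y⟫ ≥ 0`. Hence, when the nearest-point configurations of `x` and `x'` both lie
within `η` of a fixed configuration `y₀`, the displacement `x' - x` is almost orthogonal to every
edge `y₀ i - y₀ j`, so its component in `V = vectorSpan (range y₀)` is at most half its length.
On such points the projection onto `Vᗮ`, of dimension `n + 1 - k` when `y₀` is affinely
independent, has a `2`-Lipschitz inverse, which extends to a Lipschitz map on all of `Vᗮ`.
Countably many of these neighbourhoods of configurations cover the medial axis.
-/

open Metric Set Module
open scoped RealInnerProductSpace NNReal

theorem vectorSpan_range_eq_span_range_sub (R : Type*) {V ι : Type*} [Ring R] [AddCommGroup V]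
    [Module R V] (p : ι → V) :
    vectorSpan R (range p) = Submodule.span R (range fun q : ι × ι => p q.1 - p q.2) := by
  rw [vectorSpan_def, ← image2_range]
  rfl

section InnerProductSpace

variable {F : Type*} [NormedAddCommGroup F] [InnerProductSpace ℝ F]

theorem exists_norm_le_mul_norm_inner_of_mem_span {ι : Type*} [Fintype ι] (u : ι → F) :
    ∃ C : ℝ≥0, ∀ w ∈ Submodule.span ℝ (range u), ‖w‖ ≤ C * ‖fun i => ⟪u i, w⟫‖ := by
  set V := Submodule.span ℝ (range u)
  have : FiniteDimensional ℝ V := FiniteDimensional.span_of_finite ℝ (finite_range u)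
  let L : V →ₗ[ℝ] ι → ℝ := LinearMap.pi fun i => (innerₛₗ ℝ (u i)).comp V.subtype
  have hL : LinearMap.ker L = ⊥ := by
    refine LinearMap.ker_eq_bot'.mpr fun w hw => Subtype.ext ?_
    have hV : V ≤ (ℝ ∙ (w : F))ᗮ := Submodule.span_le.mpr <| range_subset_iff.mpr fun i =>
      Submodule.mem_orthogonal_singleton_iff_inner_right.mpr <| by
        rw [real_inner_comm]; exact congrFun hw i
    exact inner_self_eq_zero.mp (Submodule.mem_orthogonal_singleton_iff_inner_right.mp (hV w.2))
  obtain ⟨C, -, hC⟩ := L.exists_antilipschitzWith hL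
  refine ⟨C, fun w hw => ?_⟩
  have := hC.le_mul_dist ⟨w, hw⟩ 0
  rw [map_zero, dist_zero_right, dist_zero_right] at this
  exact this

theorem exists_norm_starProjection_vectorSpan_le {ι : Type*} [Fintype ι] (p : ι → F) :
    ∃ C : ℝ≥0, ∀ v, ‖(vectorSpan ℝ (range p)).starProjection v‖ ≤
      C * ‖fun q : ι × ι => ⟪p q.1 - p q.2, v⟫‖ := by
  set V := vectorSpan ℝ (range p)
  obtain ⟨C, hC⟩ := exists_norm_le_mul_norm_inner_of_mem_span fun q : ι × ι => p q.1 - p q.2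
  refine ⟨C, fun v => ?_⟩
  have hmem : V.starProjection v ∈ Submodule.span ℝ (range fun q : ι × ι => p q.1 - p q.2) := by
    rw [← vectorSpan_range_eq_span_range_sub]
    exact V.starProjection_apply_mem v
  have hsame (q : ι × ι) : ⟪p q.1 - p q.2, V.starProjection v⟫ = ⟪p q.1 - p q.2, v⟫ := by
    rw [← Submodule.inner_starProjection_left_eq_right, Submodule.starProjection_eq_self_iff.mpr]
    exact vsub_mem_vectorSpan ℝ (mem_range_self _) (mem_range_self _)
  simpa only [hsame] using hC _ hmem

theorem norm_le_two_mul_norm_starProjection_orthogonal (K : Submodule ℝ F)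
    [K.HasOrthogonalProjection] {v : F} (hv : ‖K.starProjection v‖ ≤ ‖v‖ / 2) :
    ‖v‖ ≤ 2 * ‖Kᗮ.starProjection v‖ := by
  have hpyth := K.norm_sq_eq_add_norm_sq_projection v
  simp only [Submodule.coe_norm, ← Submodule.starProjection_apply] at hpyth
  nlinarith [norm_nonneg v, norm_nonneg (K.starProjection v), norm_nonneg (Kᗮ.starProjection v)]

end InnerProductSpace

section NearestPoints

variable {n : ℕ} {E : Set (EuclideanSpace ℝ (Fin n))}

theorem inner_sub_nonneg_of_mem_nearestPts {x x' y y' : EuclideanSpace ℝ (Fin n)}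
    (hy : y ∈ nearestPts E x) (hy' : y' ∈ nearestPts E x') : 0 ≤ ⟪x' - x, y' - y⟫ := by
  have h₁ : ‖x - y‖ ^ 2 ≤ ‖x - y'‖ ^ 2 := by
    gcongr
    simpa only [← dist_eq_norm, hy.2] using infDist_le_dist_of_mem hy'.1
  have h₂ : ‖x' - y'‖ ^ 2 ≤ ‖x' - y‖ ^ 2 := by
    gcongr
    simpa only [← dist_eq_norm, hy'.2] using infDist_le_dist_of_mem hy.1
  simp only [norm_sub_sq_real, inner_sub_left, inner_sub_right] at *
  linarith

theorem inner_sub_le_of_mem_nearestPts {x x' y y' : EuclideanSpace ℝ (Fin n)}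
    (hy : y ∈ nearestPts E x) (hy' : y' ∈ nearestPts E x') (z z' : EuclideanSpace ℝ (Fin n)) :
    ⟪z - z', x' - x⟫ ≤ (dist z y + dist z' y') * ‖x' - x‖ := by
  have hmono : ⟪y - y', x' - x⟫ ≤ 0 := by
    have := inner_sub_nonneg_of_mem_nearestPts hy hy'
    rw [real_inner_comm, ← neg_sub, inner_neg_left] at this
    linarith
  calc ⟪z - z', x' - x⟫ = ⟪y - y', x' - x⟫ + ⟪(z - y) - (z' - y'), x' - x⟫ := by
        rw [← inner_add_left]; abel_nf
    _ ≤ 0 + ‖(z - y) - (z' - y')‖ * ‖x' - x‖ := add_le_add hmono (real_inner_le_norm _ _)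
    _ ≤ (dist z y + dist z' y') * ‖x' - x‖ := by
        rw [zero_add, dist_eq_norm, dist_eq_norm]; gcongr; exact norm_sub_le _ _

theorem abs_inner_sub_le_of_mem_nearestPts {ι : Type*} [Fintype ι] {x x' : EuclideanSpace ℝ (Fin n)}
    {y y' : ι → EuclideanSpace ℝ (Fin n)} (hy : ∀ i, y i ∈ nearestPts E x)
    (hy' : ∀ i, y' i ∈ nearestPts E x') (z : ι → EuclideanSpace ℝ (Fin n)) (i j : ι) :
    |⟪z i - z j, x' - x⟫| ≤ (dist z y + dist z y') * ‖x' - x‖ := by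
  have hle (i j : ι) : ⟪z i - z j, x' - x⟫ ≤ (dist z y + dist z y') * ‖x' - x‖ :=
    (inner_sub_le_of_mem_nearestPts (hy i) (hy' j) (z i) (z j)).trans <| by
      gcongr <;> exact dist_le_pi_dist _ _ _
  have hji := hle j i
  rw [← neg_sub, inner_neg_left] at hji
  exact abs_le.mpr ⟨by linarith, hle i j⟩

theorem exists_pos_norm_le_two_mul_norm_starProjection_of_nearestPts {ι : Type*} [Fintype ι]
    (y₀ : ι → EuclideanSpace ℝ (Fin n)) :
    ∃ η > 0, ∀ {x x' : EuclideanSpace ℝ (Fin n)} {y y' : ι → EuclideanSpace ℝ (Fin n)},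
      y ∈ ball y₀ η → y' ∈ ball y₀ η → (∀ i, y i ∈ nearestPts E x) →
      (∀ i, y' i ∈ nearestPts E x') →
      ‖x' - x‖ ≤ 2 * ‖(vectorSpan ℝ (range y₀))ᗮ.starProjection (x' - x)‖ := by
  obtain ⟨C, hC⟩ := exists_norm_starProjection_vectorSpan_le y₀
  refine ⟨1 / (4 * (C + 1)), by positivity, fun {x x' y y'} hy hy' hyx hy'x => ?_⟩
  set η : ℝ := 1 / (4 * (C + 1))
  have hinner : ‖fun q : ι × ι => ⟪y₀ q.1 - y₀ q.2, x' - x⟫‖ ≤ 2 * η * ‖x' - x‖ := by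
    refine (pi_norm_le_iff_of_nonneg (by positivity)).mpr fun q => ?_
    rw [Real.norm_eq_abs]
    refine (abs_inner_sub_le_of_mem_nearestPts hyx hy'x y₀ q.1 q.2).trans ?_
    rw [mem_ball'] at hy hy'
    gcongr
    linarith
  have hCη : (C : ℝ) * (2 * η) ≤ 1 / 2 := by
    simp only [η]; field_simp; linarith
  refine norm_le_two_mul_norm_starProjection_orthogonal _ ((hC _).trans ?_)
  nlinarith [norm_nonneg (x' - x), mul_le_mul_of_nonneg_left hinner C.2]

end NearestPoints

theorem exists_lipschitzWith_subset_range {Y F : Type*} [PseudoMetricSpace Y]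
    [NormedAddCommGroup F] [NormedSpace ℝ F] [FiniteDimensional ℝ F] {S : Set F} {g : F → Y}
    {K : ℝ≥0} (hg : ∀ x ∈ S, ∀ x' ∈ S, dist x x' ≤ K * dist (g x) (g x')) :
    ∃ (f : Y → F) (K' : ℝ≥0), LipschitzWith K' f ∧ S ⊆ range f := by
  classical
  set f₀ := Function.invFunOn g S
  have hf₀ : ∀ x ∈ S, f₀ (g x) ∈ S ∧ g (f₀ (g x)) = g x := fun x hx =>
    ⟨Function.invFunOn_mem ⟨x, hx, rfl⟩, Function.invFunOn_eq ⟨x, hx, rfl⟩⟩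
  have hlip : LipschitzOnWith K f₀ (g '' S) := by
    refine LipschitzOnWith.of_dist_le_mul ?_
    rintro _ ⟨x, hx, rfl⟩ _ ⟨x', hx', rfl⟩
    simpa only [(hf₀ x hx).2, (hf₀ x' hx').2] using hg _ (hf₀ x hx).1 _ (hf₀ x' hx').1
  obtain ⟨f, hf, hff₀⟩ := hlip.extend_finite_dimension
  refine ⟨f, _, hf, fun x hx => ⟨g x, ?_⟩⟩
  rw [← hff₀ (mem_image_of_mem g hx)]
  have := hg _ (hf₀ x hx).1 x hx
  rwa [(hf₀ x hx).2, dist_self, mul_zero, dist_le_zero] at this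

theorem AffineIndependent.finrank_orthogonal_vectorSpan {n k : ℕ}
    {y : Fin k → EuclideanSpace ℝ (Fin n)} (hy : AffineIndependent ℝ y) (hk : 1 ≤ k) :
    finrank ℝ (vectorSpan ℝ (range y))ᗮ = n + 1 - k := by
  have hV := hy.finrank_vectorSpan (n := k - 1) (by simp; omega)
  have hsum := (vectorSpan ℝ (range y)).finrank_add_finrank_orthogonal
  rw [finrank_euclideanSpace_fin] at hsum
  omega

theorem exists_lipschitzWith_subset_range_of_nearestPts {n k : ℕ}
    (E : Set (EuclideanSpace ℝ (Fin n))) {y₀ : Fin k → EuclideanSpace ℝ (Fin n)}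
    (hy₀ : AffineIndependent ℝ y₀) (hk : 1 ≤ k) :
    ∃ η > 0, ∃ (f : EuclideanSpace ℝ (Fin (n + 1 - k)) → EuclideanSpace ℝ (Fin n)) (K : ℝ≥0),
      LipschitzWith K f ∧ {x | ∃ y ∈ ball y₀ η, ∀ i, y i ∈ nearestPts E x} ⊆ range f := by
  obtain ⟨η, hη, hest⟩ := exists_pos_norm_le_two_mul_norm_starProjection_of_nearestPts (E := E) y₀
  set W := (vectorSpan ℝ (range y₀))ᗮ
  let e : W ≃ₗᵢ[ℝ] EuclideanSpace ℝ (Fin (n + 1 - k)) :=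
    ((stdOrthonormalBasis ℝ W).reindex
      (finCongr (hy₀.finrank_orthogonal_vectorSpan hk))).repr
  refine ⟨η, hη, exists_lipschitzWith_subset_range (K := 2)
    (g := fun x => e (W.orthogonalProjectionOnto x)) ?_⟩
  rintro x ⟨y, hy, hyx⟩ x' ⟨y', hy', hy'x⟩
  rw [dist_eq_norm, dist_eq_norm, ← map_sub, ← map_sub, LinearIsometryEquiv.norm_map,
    Submodule.coe_norm, ← Submodule.starProjection_apply, NNReal.coe_ofNat]
  exact hest hy' hy hy'x hyx

namespace CountablyRectifiable

variable {m n : ℕ} {S : Set (EuclideanSpace ℝ (Fin n))}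

theorem of_subset_iUnion_range {ι : Type*} [Countable ι]
    {f : ι → EuclideanSpace ℝ (Fin m) → EuclideanSpace ℝ (Fin n)} {K : ι → ℝ≥0}
    (hf : ∀ i, LipschitzWith (K i) (f i)) (hS : S ⊆ ⋃ i, range (f i)) :
    CountablyRectifiable m S := by
  rcases isEmpty_or_nonempty ι with hι | hι
  · refine ⟨fun _ _ => 0, fun _ => 0, fun _ => LipschitzWith.const 0, ?_⟩
    rw [iUnion_of_empty, subset_empty_iff] at hS
    simp [hS]
  · obtain ⟨e, he⟩ := exists_surjective_nat ι
    refine ⟨fun j => f (e j), fun j => K (e j), fun j => hf (e j), ?_⟩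
    rw [sdiff_eq_empty.mpr (he.iUnion_comp (fun i => range (f i)) ▸ hS), measure_empty]

theorem dimH_le (hS : CountablyRectifiable m S) : dimH S ≤ m := by
  obtain ⟨f, K, hf, hnull⟩ := hS
  have hrest : dimH (S \ ⋃ i, range (f i)) ≤ m := by
    have := dimH_le_of_hausdorffMeasure_ne_top (d := m) (s := S \ ⋃ i, range (f i))
      (by rw [NNReal.coe_natCast, hnull]; exact ENNReal.zero_ne_top)
    exact_mod_cast this
  have hcover : dimH (⋃ i, range (f i)) ≤ m := by
    rw [dimH_iUnion]
    refine iSup_le fun i => (hf i).dimH_range_le.trans ?_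
    rw [Real.dimH_univ_eq_finrank, finrank_euclideanSpace_fin]
  calc dimH S ≤ dimH ((S \ ⋃ i, range (f i)) ∪ ⋃ i, range (f i)) :=
        dimH_mono (by rw [sdiff_union_self]; exact subset_union_left)
    _ ≤ m := by rw [dimH_union]; exact max_le hrest hcover

end CountablyRectifiable

theorem countablyRectifiable_medialAxis {n k : ℕ} (E : Set (EuclideanSpace ℝ (Fin n)))
    (hk : 1 ≤ k) : CountablyRectifiable (n + 1 - k) (medialAxis n k E) := by
  have hpiece (y₀ : {y₀ : Fin k → EuclideanSpace ℝ (Fin n) // AffineIndependent ℝ y₀}) :=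
    exists_lipschitzWith_subset_range_of_nearestPts E y₀.2 hk
  choose η hη f K hf hS using hpiece
  obtain ⟨T, hT, hTcover⟩ :=
    TopologicalSpace.isOpen_iUnion_countable (fun y₀ => ball y₀.1 (η y₀)) fun _ => isOpen_ball
  have : Countable T := hT.to_subtype
  refine CountablyRectifiable.of_subset_iUnion_range (fun y₀ : T => hf y₀) ?_
  rintro x ⟨-, y, hyx, hy⟩
  have hyT : y ∈ ⋃ y₀ ∈ T, ball y₀.1 (η y₀) :=
    hTcover ▸ mem_iUnion.mpr ⟨⟨y, hy⟩, mem_ball_self (hη _)⟩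
  obtain ⟨y₀, hy₀T, hyy₀⟩ := mem_iUnion₂.mp hyT
  exact mem_iUnion.mpr ⟨⟨y₀, hy₀T⟩, hS y₀ ⟨y, hyy₀, hyx⟩⟩

theorem stmt12_general (n k : ℕ) (E : Set (EuclideanSpace ℝ (Fin n)))
    (hk2 : 2 ≤ k) :
    CountablyRectifiable (n + 1 - k) (medialAxis n k E) ∧
    dimH (medialAxis n k E) ≤ (n + 1 - k : ℕ) := by
  have h := countablyRectifiable_medialAxis E (by omega : 1 ≤ k)
  exact ⟨h, h.dimH_le⟩

theorem stmt12 (n k : ℕ) (E : Set (EuclideanSpace ℝ (Fin n)))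
    (hEne : E.Nonempty) (hEcl : IsClosed E)
    (hk2 : 2 ≤ k) (hkn : k ≤ n + 1) :
    CountablyRectifiable (n + 1 - k) (medialAxis n k E) ∧
    dimH (medialAxis n k E) ≤ (n + 1 - k : ℕ) :=
  stmt12_general n k E hk2
end
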